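/- Let F be a field of characteristic different from 2, t ∈ F, and let D_t be the four-dimensional superalgebra over F: the F-vector space with basis e₁, e₂, x, y and bilinear multiplication determined by e₁·e₁ = e₁, e₂·e₂ = e₂, e₁·e₂ = e₂·e₁ = 0, eᵢ·x = x·eᵢ = (1/2)x and eᵢ·y = y·eᵢ = (1/2)y for i = 1, 2, x·y = e₁ + t·e₂, y·x = −(e₁ + t·e₂), x·x = y·y = 0. If φ is a non-trivial δ-derivation of D_t (i.e. a δ-derivation that is neither a derivation of D_t nor a linear map vanishing on all products D_t·D_t), then δ = 1/2 and there exists α ∈ F such that φ(a) = α·a for all a ∈ D_t. -/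

import Mathlib

/-!
In a unital algebra, a δ-derivation `φ` satisfies `φ 1 = 2δ • φ 1` and
`φ a = δ • (φ 1 * a + φ a)`. So either `δ = 1/2` and `φ` is left multiplication by
`φ 1`, or `φ 1 = 0` and then `φ = δ • φ`, forcing `δ = 1` or `φ = 0`.
For `D_t` with identity `e₁ + e₂`, left multiplication by `z` is a `1/2`-derivation
only if `z` is a scalar: testing on `e₁e₁` kills the odd part of `z`, and testing
on `xy` equates its two even coordinates.
-/

/-- The multiplication of the four-dimensional superalgebra `D_t` in
coordinates: `(a₁, a₂, b, c)` stands for `a₁e₁ + a₂e₂ + b·x + c·y`, with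
`e₁e₁ = e₁`, `e₂e₂ = e₂`, `e₁e₂ = e₂e₁ = 0`, `eᵢx = xeᵢ = (1/2)x`,
`eᵢy = yeᵢ = (1/2)y` (`i = 1,2`), `xy = e₁ + t·e₂`, `yx = −(e₁ + t·e₂)`,
`xx = yy = 0`. -/
def DtMul {F : Type*} [Field F] (t : F) (a b : F × F × F × F) : F × F × F × F :=
  (a.1 * b.1 + (a.2.2.1 * b.2.2.2 - a.2.2.2 * b.2.2.1),
   a.2.1 * b.2.1 + t * (a.2.2.1 * b.2.2.2 - a.2.2.2 * b.2.2.1),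
   (1 / 2 : F) * ((a.1 + a.2.1) * b.2.2.1 + (b.1 + b.2.1) * a.2.2.1),
   (1 / 2 : F) * ((a.1 + a.2.1) * b.2.2.2 + (b.1 + b.2.1) * a.2.2.2))

def IsDeltaDerivation {F A : Type*} [Field F] [AddCommGroup A] [Module F A]
    (mul : A →ₗ[F] A →ₗ[F] A) (δ : F) (φ : A →ₗ[F] A) : Prop :=
  ∀ a b, φ (mul a b) = δ • (mul (φ a) b + mul a (φ b))

namespace IsDeltaDerivation

variable {F A : Type*} [Field F] [AddCommGroup A] [Module F A]
  {mul : A →ₗ[F] A →ₗ[F] A} {δ : F} {φ : A →ₗ[F] A} {e : A}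

theorem apply_eq_mul_apply_unit (h : IsDeltaDerivation mul δ φ)
    (hel : ∀ a, mul e a = a) (hδ : 2 * δ = 1) (a : A) : φ a = mul (φ e) a := by
  have hδ0 : δ ≠ 0 := by rintro rfl; simp at hδ
  have key := h e a
  rw [hel, hel] at key
  refine smul_right_injective A hδ0 ?_
  calc δ • φ a = φ a - (1 - δ) • φ a := by module
    _ = δ • mul (φ e) a := by
      rw [show 1 - δ = δ by linear_combination -hδ]
      nth_rewrite 1 [key]
      module

theorem apply_unit_eq_zero (h : IsDeltaDerivation mul δ φ)
    (hel : ∀ a, mul e a = a) (her : ∀ a, mul a e = a) (hδ : 2 * δ ≠ 1) : φ e = 0 := by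
  have key := h e e
  rw [hel, hel, her] at key
  refine (smul_eq_zero.mp ?_).resolve_left (sub_ne_zero.mpr hδ.symm)
  calc (1 - 2 * δ) • φ e = φ e - δ • (φ e + φ e) := by module
    _ = 0 := by rw [← key, sub_self]

theorem eq_zero (h : IsDeltaDerivation mul δ φ)
    (hel : ∀ a, mul e a = a) (her : ∀ a, mul a e = a) (hδ : 2 * δ ≠ 1) (hδ1 : δ ≠ 1) :
    φ = 0 := by
  ext a
  have key := h e a
  rw [hel, hel, h.apply_unit_eq_zero hel her hδ, LinearMap.map_zero₂, zero_add] at key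
  refine (smul_eq_zero.mp ?_).resolve_left (sub_ne_zero.mpr hδ1.symm)
  calc (1 - δ) • φ a = φ a - δ • φ a := by module
    _ = 0 := by rw [← key, sub_self]

end IsDeltaDerivation

section Dt

variable {F : Type*} [Field F] (t : F)

def dtMul : (F × F × F × F) →ₗ[F] (F × F × F × F) →ₗ[F] (F × F × F × F) :=
  LinearMap.mk₂ F (DtMul t)
    (fun _ _ _ => by ext <;> simp only [DtMul, Prod.fst_add, Prod.snd_add] <;> ring)
    (fun _ _ _ => by ext <;> simp only [DtMul, Prod.smul_fst, Prod.smul_snd, smul_eq_mul] <;> ring)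
    (fun _ _ _ => by ext <;> simp only [DtMul, Prod.fst_add, Prod.snd_add] <;> ring)
    (fun _ _ _ => by ext <;> simp only [DtMul, Prod.smul_fst, Prod.smul_snd, smul_eq_mul] <;> ring)

@[simp]
theorem dtMul_apply (a b : F × F × F × F) : dtMul t a b = DtMul t a b := rfl

def dtOne : F × F × F × F := (1, 1, 0, 0)

variable {t}

theorem dtMul_one_left (hchar : (2 : F) ≠ 0) (a : F × F × F × F) :
    dtMul t dtOne a = a := by
  ext <;> simp only [dtMul_apply, DtMul, dtOne] <;> field_simp <;> ring

theorem dtMul_one_right (hchar : (2 : F) ≠ 0) (a : F × F × F × F) :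
    dtMul t a dtOne = a := by
  ext <;> simp only [dtMul_apply, DtMul, dtOne] <;> field_simp <;> ring

theorem eq_smul_dtOne_of_isDeltaDerivation_dtMul (hchar : (2 : F) ≠ 0)
    {z : F × F × F × F} (h : IsDeltaDerivation (dtMul t) (1 / 2) (dtMul t z)) :
    z = z.1 • dtOne := by
  obtain ⟨p, q, r, s⟩ := z
  have he₁ := congrArg (fun w => (w.2.2.1, w.2.2.2)) (h (1, 0, 0, 0) (1, 0, 0, 0))
  have hxy := congrArg Prod.fst (h (0, 0, 1, 0) (0, 0, 0, 1))
  simp only [dtMul_apply, DtMul, Prod.mk_add_mk, Prod.smul_mk, smul_eq_mul, Prod.mk.injEq]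
    at he₁ hxy
  obtain ⟨he₁x, he₁y⟩ := he₁
  field_simp at he₁x he₁y hxy
  have hr : r = 0 := mul_left_cancel₀ hchar (by linear_combination he₁x)
  have hs : s = 0 := mul_left_cancel₀ hchar (by linear_combination he₁y)
  have hq : q = p := mul_left_cancel₀ hchar (by linear_combination -hxy)
  subst hr hs hq
  ext <;> simp [dtOne]

end Dt

/-- **δ-derivations of the superalgebras `D_t`.**
Let `F` be a field of characteristic not `2`, `t ∈ F`, `δ ∈ F` and `φ` a
`δ`-derivation of `D_t`.  If `φ` is non-trivial (neither a derivation nor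
vanishing on all products), then `δ = 1/2` and `φ a = α • a` for some
`α ∈ F`. -/
theorem delta_derivation_of_Dt
    {F : Type*} [Field F] (hchar : (2 : F) ≠ 0) (t : F)
    (δ : F) (φ : (F × F × F × F) →ₗ[F] (F × F × F × F))
    (hφ : ∀ a b : F × F × F × F,
      φ (DtMul t a b) = δ • (DtMul t (φ a) b + DtMul t a (φ b)))
    (hnotder : ¬ ∀ a b : F × F × F × F,
      φ (DtMul t a b) = DtMul t (φ a) b + DtMul t a (φ b))
    (hnotvanish : ¬ ∀ a b : F × F × F × F, φ (DtMul t a b) = 0) :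
    δ = 1 / 2 ∧ ∃ α : F, ∀ a : F × F × F × F, φ a = α • a := by
  have hφ' : IsDeltaDerivation (dtMul t) δ φ := hφ
  have hel := dtMul_one_left (t := t) hchar
  have her := dtMul_one_right (t := t) hchar
  have hδ : 2 * δ = 1 := by
    by_contra hδ
    by_cases hδ1 : δ = 1
    · exact hnotder (by simpa [hδ1] using hφ)
    · exact hnotvanish fun a b => by simp [hφ'.eq_zero hel her hδ hδ1]
  obtain rfl : δ = 1 / 2 := by field_simp; linear_combination hδ
  have hmul : dtMul t (φ dtOne) = φ :=
    LinearMap.ext fun a => (hφ'.apply_eq_mul_apply_unit hel hδ a).symm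
  have hscalar := eq_smul_dtOne_of_isDeltaDerivation_dtMul hchar (hmul ▸ hφ')
  obtain ⟨α, hα⟩ : ∃ α : F, φ dtOne = α • dtOne := ⟨_, hscalar⟩
  refine ⟨rfl, α, fun a => ?_⟩
  rw [hφ'.apply_eq_mul_apply_unit hel hδ a, hα, LinearMap.map_smul₂, hel]
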